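/- Let n ≥ 1, ε > 0, R ≥ 0, N ≥ 1, and let c_n^ε = ε^n · Γ(n/2+1) / (Γ(n) · n · π^{n/2}). Then ∫_{{(v_1,…,v_N) ∈ (ℝ^n)^N : Σ_{j=1}^{N} ‖v_j‖ ≤ R}} Π_{i=1}^{N} c_n^ε·exp(−ε‖v_i‖) dv_1⋯dv_N ≥ 1 − exp(−ε·R) · e_{n−1}(ε·R) · Σ_{k=0}^{N−1} (c_n^ε · V_n(R))^k, where V_n(R) = π^{n/2}·R^n/Γ(n/2+1) is the volume of the Euclidean ball of radius R in ℝ^n and e_k(α) = Σ_{i=0}^{k} α^i/i!. (Note Σ_{k=0}^{N−1} (c_n^ε·V_n(R))^k = ((c_n^ε·V_n(R))^N − 1)/(c_n^ε·V_n(R) − 1) when c_n^ε·V_n(R) ≠ 1, and c_n^ε·V_n(R) = (ε·R)^n/n!.) -/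

import Mathlib

/-!
Peel off the first vector: by Fubini, the `(N+1)`-fold mass at radius `R` is
`∫ g(x) P_N(R - ‖x‖) dx`, where `g` is the Laplacian density. Restrict to `‖x‖ ≤ R` and insert the
induction hypothesis `P_N(t) ≥ 1 - e^{-εt} e_{n-1}(εt) S_N(t)`, with `S_N` the geometric sum.
In polar coordinates the mass of `g` on the ball of radius `R` is the incomplete Gamma integral
`1 - e^{-εR} e_{n-1}(εR)`. On that ball `g(x) e^{-ε(R - ‖x‖)} = c_n^ε e^{-εR}`, and the remaining
factors only grow with the radius, so the error term is at most
`e^{-εR} e_{n-1}(εR) (1 + c_n^ε V_n(R) S_N(R)) = e^{-εR} e_{n-1}(εR) S_{N+1}(R)`.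
-/

open MeasureTheory Real Finset

/-- The normalising constant of the `n`-dimensional Laplacian density with parameter `ε`. -/
noncomputable def lapConst (n : ℕ) (ε : ℝ) : ℝ :=
  ε ^ n * Real.Gamma ((n : ℝ) / 2 + 1) / (Real.Gamma n * n * Real.pi ^ ((n : ℝ) / 2))

/-- The volume of the Euclidean ball of radius `R` in `ℝ^n`. -/
noncomputable def ballVol (n : ℕ) (R : ℝ) : ℝ :=
  Real.pi ^ ((n : ℝ) / 2) * R ^ n / Real.Gamma ((n : ℝ) / 2 + 1)

open scoped Nat
open Metric

/-- The paper's `e_{m-1}(x)`: the index counts terms, not the top degree. -/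
noncomputable def expPartialSum (m : ℕ) (x : ℝ) : ℝ := ∑ i ∈ range m, x ^ i / i !

section expPartialSum

theorem expPartialSum_succ_zero (m : ℕ) : expPartialSum (m + 1) 0 = 1 := by
  simp [expPartialSum, sum_range_succ']

theorem continuous_expPartialSum (m : ℕ) : Continuous (expPartialSum m) := by
  unfold expPartialSum; fun_prop

theorem expPartialSum_nonneg (m : ℕ) {x : ℝ} (hx : 0 ≤ x) : 0 ≤ expPartialSum m x :=
  sum_nonneg fun _ _ => by positivity

theorem expPartialSum_le_expPartialSum (m : ℕ) {x y : ℝ} (hx : 0 ≤ x) (hxy : x ≤ y) :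
    expPartialSum m x ≤ expPartialSum m y :=
  sum_le_sum fun _ _ => by gcongr

theorem hasDerivAt_expPartialSum_succ (m : ℕ) (x : ℝ) :
    HasDerivAt (expPartialSum (m + 1)) (expPartialSum m x) x := by
  induction m with
  | zero =>
    have h1 : expPartialSum 1 = fun _ => 1 := funext fun _ => by simp [expPartialSum]
    simpa [h1, expPartialSum] using hasDerivAt_const x (1 : ℝ)
  | succ m ih =>
    have hterm : HasDerivAt (fun x : ℝ => x ^ (m + 1) / (m + 1)!) (x ^ m / m !) x := by
      refine ((hasDerivAt_pow (m + 1) x).div_const ((m + 1)! : ℝ)).congr_deriv ?_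
      push_cast [Nat.factorial_succ, Nat.add_sub_cancel]
      field_simp
    have hsplit :
        expPartialSum (m + 2) = fun x => expPartialSum (m + 1) x + x ^ (m + 1) / (m + 1)! :=
      funext fun x => sum_range_succ _ _
    rw [hsplit, expPartialSum, sum_range_succ]
    exact ih.add hterm

theorem hasDerivAt_exp_neg_mul_expPartialSum (m : ℕ) {ε : ℝ} (hε : ε ≠ 0) (t : ℝ) :
    HasDerivAt (fun t => -(m ! / ε ^ (m + 1)) * (exp (-ε * t) * expPartialSum (m + 1) (ε * t)))
      (t ^ m * exp (-ε * t)) t := by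
  have hexp : HasDerivAt (fun t => exp (-ε * t)) (-ε * exp (-ε * t)) t := by
    simpa [mul_comm] using ((hasDerivAt_id t).const_mul (-ε)).exp
  have hsum : HasDerivAt (fun t => expPartialSum (m + 1) (ε * t))
      (ε * expPartialSum m (ε * t)) t := by
    have := (hasDerivAt_expPartialSum_succ m (ε * t)).comp t ((hasDerivAt_id' t).const_mul ε)
    rwa [mul_one, mul_comm] at this
  refine ((hexp.mul hsum).const_mul (-(m ! / ε ^ (m + 1)))).congr_deriv ?_
  simp only [expPartialSum, sum_range_succ]
  field_simp
  ring

theorem integral_pow_mul_exp_neg_mul (m : ℕ) {ε : ℝ} (hε : ε ≠ 0) (R : ℝ) :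
    ∫ t in (0 : ℝ)..R, t ^ m * exp (-ε * t) =
      m ! / ε ^ (m + 1) * (1 - exp (-ε * R) * expPartialSum (m + 1) (ε * R)) := by
  have hcont : Continuous fun t : ℝ => t ^ m * exp (-ε * t) := by fun_prop
  rw [intervalIntegral.integral_eq_sub_of_hasDerivAt
    (fun t _ => hasDerivAt_exp_neg_mul_expPartialSum m hε t) (hcont.intervalIntegrable _ _)]
  simp only [mul_zero, exp_zero, expPartialSum_succ_zero]
  ring

end expPartialSum

section polar

open Set

theorem integral_closedBall_fun_norm_addHaar {E F : Type*} [NormedAddCommGroup E]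
    [NormedSpace ℝ E] [FiniteDimensional ℝ E] [MeasurableSpace E] [BorelSpace E] [Nontrivial E]
    [NormedAddCommGroup F] [NormedSpace ℝ F]
    (μ : Measure E) [μ.IsAddHaarMeasure] (f : ℝ → F) {R : ℝ} (hR : 0 ≤ R) :
    ∫ x in closedBall (0 : E) R, f ‖x‖ ∂μ =
      Module.finrank ℝ E • μ.real (ball 0 1) •
        ∫ y in (0 : ℝ)..R, y ^ (Module.finrank ℝ E - 1) • f y := by
  have hind : (closedBall (0 : E) R).indicator (fun x => f ‖x‖) =
      fun x => (Iic R).indicator f ‖x‖ := by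
    ext x
    classical
    simp only [Set.indicator_apply, mem_closedBall_zero_iff, Set.mem_Iic]
  rw [← integral_indicator measurableSet_closedBall, hind, integral_fun_norm_addHaar μ,
    intervalIntegral.integral_of_le hR, ← Ioi_inter_Iic, ← setIntegral_indicator measurableSet_Iic]
  simp only [indicator_smul_apply]

end polar

noncomputable def sumNormIntegral {E : Type*} [Norm E] [MeasurableSpace E] (μ : Measure E)
    (f : E → ℝ) (N : ℕ) (R : ℝ) : ℝ :=
  ∫ v in {v : Fin N → E | ∑ j, ‖v j‖ ≤ R}, ∏ i, f (v i) ∂Measure.pi fun _ => μ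

section sumNormIntegral

variable {E : Type*} [NormedAddCommGroup E] [MeasurableSpace E] {μ : Measure E} {f : E → ℝ}

theorem sumNormIntegral_zero {R : ℝ} (hR : 0 ≤ R) : sumNormIntegral μ f 0 R = 1 := by
  simp [sumNormIntegral, hR, measureReal_def, Measure.pi_empty_univ]

variable [OpensMeasurableSpace E]

theorem measurableSet_sum_norm_le (N : ℕ) (R : ℝ) :
    MeasurableSet {v : Fin N → E | ∑ j, ‖v j‖ ≤ R} :=
  measurableSet_le (Finset.measurable_sum _ fun j _ => (measurable_pi_apply j).norm)
    measurable_const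

theorem sumNormIntegral_nonneg (hf : 0 ≤ f) (N : ℕ) (R : ℝ) : 0 ≤ sumNormIntegral μ f N R :=
  setIntegral_nonneg (measurableSet_sum_norm_le N R) fun _ _ => prod_nonneg fun _ _ => hf _

theorem integral_indicator_sum_norm_le_prod_mk (N : ℕ) (R : ℝ) (x : E) :
    ∫ v, {p : E × (Fin N → E) | ‖p.1‖ + ∑ j, ‖p.2 j‖ ≤ R}.indicator
      (fun p => f p.1 * ∏ i, f (p.2 i)) (x, v) ∂Measure.pi (fun _ => μ) =
      f x * sumNormIntegral μ f N (R - ‖x‖) := by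
  classical
  rw [sumNormIntegral, ← integral_const_mul, ← integral_indicator (measurableSet_sum_norm_le N _)]
  congr 1 with v
  simp only [Set.indicator_apply, Set.mem_ofPred_eq, le_sub_iff_add_le']

variable [SigmaFinite μ]

theorem integrable_indicator_sum_norm_le_prod (hf : Integrable f μ) (N : ℕ) (R : ℝ) :
    Integrable ({p : E × (Fin N → E) | ‖p.1‖ + ∑ j, ‖p.2 j‖ ≤ R}.indicator
      fun p => f p.1 * ∏ i, f (p.2 i)) (μ.prod (Measure.pi fun _ => μ)) := by
  refine (hf.mul_prod (Integrable.fintype_prod fun _ => hf)).indicator ?_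
  exact measurableSet_le (measurable_fst.norm.add
    (Finset.measurable_sum _ fun j _ => ((measurable_pi_apply j).comp measurable_snd).norm))
    measurable_const

theorem sumNormIntegral_succ_eq_integral_prod (N : ℕ) (R : ℝ) :
    sumNormIntegral μ f (N + 1) R =
      ∫ p, {p : E × (Fin N → E) | ‖p.1‖ + ∑ j, ‖p.2 j‖ ≤ R}.indicator
        (fun p => f p.1 * ∏ i, f (p.2 i)) p ∂μ.prod (Measure.pi fun _ => μ) := by
  classical
  rw [sumNormIntegral, ← integral_indicator (measurableSet_sum_norm_le _ R),
    ← ((measurePreserving_piFinSuccAbove (fun _ : Fin (N + 1) => μ) 0).symm).integral_comp']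
  congr 1 with p
  simp only [MeasurableEquiv.piFinSuccAbove_symm_apply, Fin.insertNthEquiv, Equiv.coe_fn_mk,
    Fin.insertNth_zero, Set.indicator_apply, Set.mem_ofPred_eq, Fin.sum_univ_succ,
    Fin.prod_univ_succ, Fin.cons_zero, Fin.cons_succ, Fin.zero_succAbove, cast_eq]

theorem sumNormIntegral_succ (hf : Integrable f μ) (N : ℕ) (R : ℝ) :
    sumNormIntegral μ f (N + 1) R = ∫ x, f x * sumNormIntegral μ f N (R - ‖x‖) ∂μ := by
  rw [sumNormIntegral_succ_eq_integral_prod, integral_prod _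
    (integrable_indicator_sum_norm_le_prod hf N R)]
  simp only [integral_indicator_sum_norm_le_prod_mk]

theorem integrable_mul_sumNormIntegral (hf : Integrable f μ) (N : ℕ) (R : ℝ) :
    Integrable (fun x => f x * sumNormIntegral μ f N (R - ‖x‖)) μ := by
  simpa only [integral_indicator_sum_norm_le_prod_mk] using
    (integrable_indicator_sum_norm_le_prod hf N R).integral_prod_left

end sumNormIntegral

theorem lapConst_pos {n : ℕ} (hn : n ≠ 0) {ε : ℝ} (hε : 0 < ε) : 0 < lapConst n ε := by
  have : 0 < Gamma n := Gamma_pos_of_pos (by positivity)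
  unfold lapConst
  positivity

theorem lapConst_mul_ballVol {n : ℕ} (hn : n ≠ 0) (ε R : ℝ) :
    lapConst n ε * ballVol n R = (ε * R) ^ n / n ! := by
  have hΓ : Gamma n * n = n ! := by
    rw [mul_comm, ← Gamma_add_one (by exact_mod_cast hn), Gamma_nat_eq_factorial]
  have : Gamma ((n : ℝ) / 2 + 1) ≠ 0 := (Gamma_pos_of_pos (by positivity)).ne'
  have : π ^ ((n : ℝ) / 2) ≠ 0 := (rpow_pos_of_pos pi_pos _).ne'
  rw [lapConst, ballVol, hΓ]
  field_simp
  ring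

theorem volume_real_ball_euclideanSpace {n : ℕ} (hn : n ≠ 0) (x : EuclideanSpace ℝ (Fin n))
    {r : ℝ} (hr : 0 ≤ r) : volume.real (ball x r) = ballVol n r := by
  have : NeZero n := ⟨hn⟩
  rw [measureReal_def, EuclideanSpace.volume_ball, Fintype.card_fin, ← ENNReal.ofReal_pow hr,
    ← ENNReal.ofReal_mul (by positivity), ENNReal.toReal_ofReal (by positivity), ballVol,
    sqrt_eq_rpow, ← rpow_natCast (π ^ (1 / 2 : ℝ)), ← rpow_mul pi_pos.le]
  ring_nf

theorem volume_real_closedBall_euclideanSpace {n : ℕ} (hn : n ≠ 0) (x : EuclideanSpace ℝ (Fin n))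
    {r : ℝ} (hr : 0 ≤ r) : volume.real (closedBall x r) = ballVol n r := by
  have : NeZero n := ⟨hn⟩
  rw [measureReal_def, Measure.addHaar_closedBall_eq_addHaar_ball, ← measureReal_def,
    volume_real_ball_euclideanSpace hn x hr]

noncomputable def lapDensity (n : ℕ) (ε : ℝ) (v : EuclideanSpace ℝ (Fin n)) : ℝ :=
  lapConst n ε * exp (-ε * ‖v‖)

section lapDensity

variable {n : ℕ} {ε : ℝ}

theorem continuous_lapDensity : Continuous (lapDensity n ε) := by
  unfold lapDensity; fun_prop

theorem lapDensity_nonneg (hn : n ≠ 0) (hε : 0 < ε) (v : EuclideanSpace ℝ (Fin n)) :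
    0 ≤ lapDensity n ε v :=
  mul_nonneg (lapConst_pos hn hε).le (exp_nonneg _)

theorem integrable_lapDensity (hn : n ≠ 0) (hε : 0 < ε) : Integrable (lapDensity n ε) := by
  have : NeZero n := ⟨hn⟩
  have hIoi := (integrableOn_rpow_mul_exp_neg_mul_rpow (s := ((n - 1 : ℕ) : ℝ)) (p := 1)
    (neg_one_lt_zero.trans_le (Nat.cast_nonneg _)) one_pos hε).const_mul (lapConst n ε)
  refine (integrable_fun_norm_addHaar volume (f := fun y => lapConst n ε * exp (-ε * y))).mpr ?_
  refine IntegrableOn.congr_fun hIoi (fun y _ => ?_) measurableSet_Ioi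
  simp only [finrank_euclideanSpace_fin, rpow_natCast, rpow_one, smul_eq_mul]
  ring

theorem integral_closedBall_lapDensity (hn : n ≠ 0) (hε : 0 < ε) {R : ℝ} (hR : 0 ≤ R) :
    ∫ v in closedBall 0 R, lapDensity n ε v = 1 - exp (-ε * R) * expPartialSum n (ε * R) := by
  have : NeZero n := ⟨hn⟩
  obtain ⟨m, rfl⟩ := Nat.exists_eq_add_one_of_ne_zero hn
  have hunit : lapConst (m + 1) ε * volume.real (ball (0 : EuclideanSpace ℝ (Fin (m + 1))) 1) =
      ε ^ (m + 1) / (m + 1)! := by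
    rw [volume_real_ball_euclideanSpace hn _ zero_le_one, lapConst_mul_ballVol hn, mul_one]
  simp only [lapDensity]
  rw [integral_closedBall_fun_norm_addHaar volume (fun y => lapConst (m + 1) ε * exp (-ε * y)) hR]
  simp only [finrank_euclideanSpace_fin, Nat.add_sub_cancel, smul_eq_mul, nsmul_eq_mul]
  simp_rw [mul_left_comm _ (lapConst _ _)]
  rw [intervalIntegral.integral_const_mul, integral_pow_mul_exp_neg_mul m hε.ne']
  calc _ = lapConst (m + 1) ε * volume.real (ball (0 : EuclideanSpace ℝ (Fin (m + 1))) 1) *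
          ((m + 1) * m ! / ε ^ (m + 1)) * (1 - exp (-ε * R) * expPartialSum (m + 1) (ε * R)) := by
        push_cast; ring
    _ = _ := by
        rw [hunit, Nat.factorial_succ]
        push_cast
        field_simp

end lapDensity

/-- `1 - lapMassDeficit n ε N R` is the claimed lower bound for the `N`-fold mass. -/
noncomputable def lapMassDeficit (n : ℕ) (ε : ℝ) (N : ℕ) (t : ℝ) : ℝ :=
  exp (-ε * t) * expPartialSum n (ε * t) * ∑ k ∈ range N, ((ε * t) ^ n / n !) ^ k

section lapMassDeficit

variable {n : ℕ} {ε : ℝ}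

theorem continuous_lapMassDeficit (N : ℕ) : Continuous (lapMassDeficit n ε N) := by
  unfold lapMassDeficit
  have := continuous_expPartialSum n
  fun_prop

theorem lapMassDeficit_succ (N : ℕ) (t : ℝ) :
    lapMassDeficit n ε (N + 1) t = exp (-ε * t) * expPartialSum n (ε * t) +
      (ε * t) ^ n / n ! * lapMassDeficit n ε N t := by
  rw [lapMassDeficit, lapMassDeficit, geom_sum_succ]
  ring

/-- The exponential factors recombine to `e^{-εR}`, and what is left is monotone in the radius. -/
theorem lapDensity_mul_lapMassDeficit_le (hn : n ≠ 0) (hε : 0 < ε) (N : ℕ) {R : ℝ}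
    {x : EuclideanSpace ℝ (Fin n)} (hx : ‖x‖ ≤ R) :
    lapDensity n ε x * lapMassDeficit n ε N (R - ‖x‖) ≤ lapConst n ε * lapMassDeficit n ε N R := by
  have hexp : exp (-ε * ‖x‖) * exp (-ε * (R - ‖x‖)) = exp (-ε * R) := by
    rw [← exp_add]; ring_nf
  have h0 : 0 ≤ ε * (R - ‖x‖) := mul_nonneg hε.le (sub_nonneg.mpr hx)
  have hle : ε * (R - ‖x‖) ≤ ε * R := by nlinarith [norm_nonneg x]
  calc lapDensity n ε x * lapMassDeficit n ε N (R - ‖x‖)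
      = lapConst n ε * (exp (-ε * R) * expPartialSum n (ε * (R - ‖x‖)) *
          ∑ k ∈ range N, ((ε * (R - ‖x‖)) ^ n / n !) ^ k) := by
        rw [lapDensity, lapMassDeficit, ← hexp]; ring
    _ ≤ lapConst n ε * lapMassDeficit n ε N R := by
        have hc := (lapConst_pos hn hε).le
        have := expPartialSum_le_expPartialSum n h0 hle
        have := expPartialSum_nonneg n h0
        unfold lapMassDeficit
        gcongr
        exact mul_nonneg (exp_nonneg _) (expPartialSum_nonneg n (h0.trans hle))

theorem one_sub_lapMassDeficit_le_sumNormIntegral (hn : n ≠ 0) (hε : 0 < ε) (N : ℕ) {R : ℝ}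
    (hR : 0 ≤ R) : 1 - lapMassDeficit n ε N R ≤ sumNormIntegral volume (lapDensity n ε) N R := by
  induction N generalizing R with
  | zero => simp [lapMassDeficit, sumNormIntegral_zero hR]
  | succ N ih =>
    set g := lapDensity n ε
    have hg := integrable_lapDensity hn hε
    have hB : IsCompact (closedBall (0 : EuclideanSpace ℝ (Fin n)) R) := isCompact_closedBall _ _
    have hcont : Continuous fun x : EuclideanSpace ℝ (Fin n) =>
        g x * lapMassDeficit n ε N (R - ‖x‖) :=
      continuous_lapDensity.mul ((continuous_lapMassDeficit N).comp (by fun_prop))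
    have hcont' : Continuous fun x : EuclideanSpace ℝ (Fin n) =>
        g x * (1 - lapMassDeficit n ε N (R - ‖x‖)) :=
      continuous_lapDensity.mul (continuous_const.sub
        ((continuous_lapMassDeficit N).comp (by fun_prop)))
    calc 1 - lapMassDeficit n ε (N + 1) R
        = (1 - exp (-ε * R) * expPartialSum n (ε * R)) -
            ∫ _ in closedBall (0 : EuclideanSpace ℝ (Fin n)) R,
              lapConst n ε * lapMassDeficit n ε N R := by
          rw [setIntegral_const, volume_real_closedBall_euclideanSpace hn 0 hR, smul_eq_mul,
            ← mul_assoc, mul_comm _ (lapConst n ε), lapConst_mul_ballVol hn, lapMassDeficit_succ]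
          ring
      _ ≤ (∫ x in closedBall 0 R, g x) -
            ∫ x in closedBall 0 R, g x * lapMassDeficit n ε N (R - ‖x‖) := by
          rw [integral_closedBall_lapDensity hn hε hR]
          refine sub_le_sub_left (setIntegral_mono_on (hcont.continuousOn.integrableOn_compact hB)
            (integrableOn_const (hB.measure_lt_top (μ := volume)).ne) measurableSet_closedBall
            fun x hx => lapDensity_mul_lapMassDeficit_le hn hε N (mem_closedBall_zero_iff.mp hx)) _
      _ = ∫ x in closedBall 0 R, g x * (1 - lapMassDeficit n ε N (R - ‖x‖)) := by
          simp_rw [mul_one_sub]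
          exact (integral_sub hg.integrableOn (hcont.continuousOn.integrableOn_compact hB)).symm
      _ ≤ ∫ x in closedBall 0 R, g x * sumNormIntegral volume g N (R - ‖x‖) :=
          setIntegral_mono_on (hcont'.continuousOn.integrableOn_compact hB)
            (integrable_mul_sumNormIntegral hg N R).integrableOn measurableSet_closedBall
            fun x hx => mul_le_mul_of_nonneg_left
              (ih (sub_nonneg.mpr (mem_closedBall_zero_iff.mp hx))) (lapDensity_nonneg hn hε x)
      _ ≤ ∫ x, g x * sumNormIntegral volume g N (R - ‖x‖) :=
          setIntegral_le_integral (integrable_mul_sumNormIntegral hg N R) (.of_forall fun x =>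
            mul_nonneg (lapDensity_nonneg hn hε x)
              (sumNormIntegral_nonneg (lapDensity_nonneg hn hε) N _))
      _ = sumNormIntegral volume g (N + 1) R := (sumNormIntegral_succ hg N R).symm

end lapMassDeficit

theorem lapIter_lower_bound_general (n : ℕ) (hn : 1 ≤ n) (ε : ℝ) (hε : 0 < ε)
    (R : ℝ) (hR : 0 ≤ R) (N : ℕ) :
    1 - Real.exp (-ε * R) * (∑ k ∈ Finset.range n, (ε * R) ^ k / (Nat.factorial k)) *
          ∑ k ∈ Finset.range N, (lapConst n ε * ballVol n R) ^ k ≤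
      ∫ v in {v : Fin N → EuclideanSpace ℝ (Fin n) | ∑ j, ‖v j‖ ≤ R},
        ∏ i, lapConst n ε * Real.exp (-ε * ‖v i‖) := by
  have hn0 : n ≠ 0 := Nat.one_le_iff_ne_zero.mp hn
  rw [lapConst_mul_ballVol hn0]
  exact one_sub_lapMassDeficit_le_sumNormIntegral hn0 hε N hR

/-- for `n, N ≥ 1`, `ε > 0`, `R ≥ 0`, the integral of the product of `N`
independent `n`-dimensional Laplacian densities over the region where the sum of the
Euclidean norms is at most `R` is at least
`1 − exp(−εR) · e_{n−1}(εR) · Σ_{k=0}^{N−1} (c_n^ε · V_n(R))^k`. -/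
theorem lapIter_lower_bound (n : ℕ) (hn : 1 ≤ n) (ε : ℝ) (hε : 0 < ε)
    (R : ℝ) (hR : 0 ≤ R) (N : ℕ) (hN : 1 ≤ N) :
    1 - Real.exp (-ε * R) * (∑ k ∈ Finset.range n, (ε * R) ^ k / (Nat.factorial k)) *
          ∑ k ∈ Finset.range N, (lapConst n ε * ballVol n R) ^ k ≤
      ∫ v in {v : Fin N → EuclideanSpace ℝ (Fin n) | ∑ j, ‖v j‖ ≤ R},
        ∏ i, lapConst n ε * Real.exp (-ε * ‖v i‖) :=
  lapIter_lower_bound_general n hn ε hε R hR N
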